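/- arXiv:2212.04166 — 2 statements merged into one kernel-verified Lean document; each statement's English description precedes it below -/
import Mathlib

section
/- With the gluing construction J as above, for a vertex w of H, the set of vertices maximally distant from w in J equals (MD_H(w) \ {v_1,...,v_k}) ∪ ⋃_{i=1}^k MD_{G_i}(u_i), where MD_G(x) denotes the set of vertices maximally distant from x in G (with u_i identified with v_i in J). -/
open SimpleGraph

/-- `y` is maximally distant from `x` in `G`: no neighbor of `y` is farther from `x` than `y`. -/
def MaxDistantFrom {V : Type*} (G : SimpleGraph V) (y x : V) : Prop :=
  ∀ z, G.Adj y z → G.dist z x ≤ G.dist y x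

/-- `u` and `v` are mutually maximally distant in `G`. -/
def MutuallyMaxDistant {V : Type*} (G : SimpleGraph V) (u v : V) : Prop :=
  MaxDistantFrom G u v ∧ MaxDistantFrom G v u

/-- The strong resolving graph of `G`: edges are the mutually maximally distant pairs. -/
def srGraph {V : Type*} (G : SimpleGraph V) : SimpleGraph V where
  Adj u v := u ≠ v ∧ MutuallyMaxDistant G u v
  symm := ⟨fun u v h => ⟨h.1.symm, h.2.2, h.2.1⟩⟩
  loopless := ⟨fun u h => h.1 rfl⟩

/-- `w` strongly resolves `u` and `v`: `v` lies on a shortest `w`–`u` path, or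
`u` lies on a shortest `w`–`v` path. -/
def StronglyResolves {V : Type*} (G : SimpleGraph V) (w u v : V) : Prop :=
  G.dist w v + G.dist v u = G.dist w u ∨ G.dist w u + G.dist u v = G.dist w v

/-- `R` is a strong resolving set for `G`. -/
def StrongResolvingSet {V : Type*} (G : SimpleGraph V) (R : Set V) : Prop :=
  ∀ u v : V, u ≠ v → ∃ w ∈ R, StronglyResolves G w u v
/-- The graph obtained from the disjoint union of the graphs `G i` and `H` by identifying,
for each `i`, the vertex `u i` of `G i` with the vertex `v i` of `H`.  The vertices of
`G i` other than `u i` keep their identity (as `Sum.inl ⟨i, x⟩`), the vertices of `H`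
keep their identity (as `Sum.inr w`), and `u i` is identified with `v i`. -/
def glue {k : ℕ} {α : Fin k → Type*} {β : Type*}
    (G : ∀ i, SimpleGraph (α i)) (H : SimpleGraph β) (u : ∀ i, α i) (v : Fin k → β) :
    SimpleGraph ((Σ i, {x : α i // x ≠ u i}) ⊕ β) where
  Adj a b :=
    (∃ (i : Fin k) (x y : {z : α i // z ≠ u i}), (G i).Adj x.1 y.1 ∧
        a = Sum.inl ⟨i, x⟩ ∧ b = Sum.inl ⟨i, y⟩) ∨
    (∃ (i : Fin k) (x : {z : α i // z ≠ u i}), (G i).Adj x.1 (u i) ∧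
        ((a = Sum.inl ⟨i, x⟩ ∧ b = Sum.inr (v i)) ∨
         (b = Sum.inl ⟨i, x⟩ ∧ a = Sum.inr (v i)))) ∨
    (∃ w w' : β, H.Adj w w' ∧ a = Sum.inr w ∧ b = Sum.inr w')
  symm := by
    constructor
    rintro a b (⟨i, x, y, hxy, ha, hb⟩ | ⟨i, x, hx, h | h⟩ | ⟨w, w', hww, ha, hb⟩)
    · exact Or.inl ⟨i, y, x, hxy.symm, hb, ha⟩
    · exact Or.inr (Or.inl ⟨i, x, hx, Or.inr h⟩)
    · exact Or.inr (Or.inl ⟨i, x, hx, Or.inl h⟩)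
    · exact Or.inr (Or.inr ⟨w', w, hww.symm, hb, ha⟩)
  loopless := by
    constructor
    rintro a (⟨i, x, y, hxy, ha, hb⟩ | ⟨i, x, _, ⟨ha, hb⟩ | ⟨ha, hb⟩⟩ | ⟨w, w', hww, ha, hb⟩)
    · subst ha
      injection hb with h
      injection h with h1 h2
      subst h2
      exact (G i).loopless.irrefl _ hxy
    · subst ha; simp at hb
    · subst ha; simp at hb
    · subst ha
      injection hb with h
      subst h
      exact H.loopless.irrefl _ hww

/-! Distances to a vertex `w` of `H` in the glued graph are computed by a potential: the map
sending `x ∈ G i` to `d(x, u i) + d(v i, w)` and `z ∈ H` to `d(z, w)` changes by at most one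
along every edge, so it bounds the distance from below, and the obvious walks attain it.
Hence a vertex of `G i` is maximally distant from `w` exactly when it is so from `u i` in `G i`,
while an attachment vertex `v i` never is, since stepping into `G i` increases the distance. -/

namespace SimpleGraph

variable {V : Type*} {G : SimpleGraph V}

lemma Adj.dist_le_dist_add_one {x y : V} (h : G.Adj x y) (z : V) :
    G.dist x z ≤ G.dist y z + 1 := by
  have := h.reachable.dist_triangle_left z
  rw [dist_eq_one_iff_adj.mpr h] at this
  omega

lemma Walk.le_add_length_of_forall_adj_le {f : V → ℕ} (hf : ∀ a b, G.Adj a b → f a ≤ f b + 1)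
    {a b : V} (p : G.Walk a b) : f a ≤ f b + p.length := by
  induction p with
  | nil => simp
  | cons h _ ih =>
    have := hf _ _ h
    rw [Walk.length_cons]
    omega

lemma Walk.dist_eq_of_length_le_of_forall_adj_le {f : V → ℕ}
    (hf : ∀ a b, G.Adj a b → f a ≤ f b + 1) {a b : V} (hb : f b = 0) (p : G.Walk a b)
    (hp : p.length ≤ f a) : G.dist a b = f a := by
  obtain ⟨q, hq⟩ := p.reachable.exists_walk_length_eq_dist
  have := q.le_add_length_of_forall_adj_le hf
  have := dist_le p
  omega

end SimpleGraph

namespace glue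

variable {k : ℕ} {α : Fin k → Type*} {β : Type*}
  {G : ∀ i, SimpleGraph (α i)} {H : SimpleGraph β} {u : ∀ i, α i} {v : Fin k → β}

open Classical in
noncomputable def incl (u : ∀ i, α i) (v : Fin k → β) (i : Fin k) (x : α i) :
    (Σ i, {x : α i // x ≠ u i}) ⊕ β :=
  if h : x = u i then .inr (v i) else .inl ⟨i, x, h⟩

@[simp]
lemma incl_self (i : Fin k) : incl u v i (u i) = .inr (v i) :=
  dif_pos rfl

@[simp]
lemma incl_of_ne {i : Fin k} {x : α i} (hx : x ≠ u i) : incl u v i x = .inl ⟨i, x, hx⟩ :=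
  dif_neg hx

variable (G H u v) in
def inrHom : H →g glue G H u v :=
  ⟨Sum.inr, fun h => Or.inr (Or.inr ⟨_, _, h, rfl, rfl⟩)⟩

variable (G H u v) in
noncomputable def inclHom (i : Fin k) : G i →g glue G H u v where
  toFun := incl u v i
  map_rel' {x y} h := by
    by_cases hx : x = u i
    · subst hx
      exact Or.inr (Or.inl ⟨i, ⟨y, h.ne'⟩, h.symm, Or.inr ⟨incl_of_ne h.ne', incl_self i⟩⟩)
    by_cases hy : y = u i
    · subst hy
      exact Or.inr (Or.inl ⟨i, ⟨x, hx⟩, h, Or.inl ⟨incl_of_ne hx, incl_self i⟩⟩)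
    · exact Or.inl ⟨i, ⟨x, hx⟩, ⟨y, hy⟩, h, incl_of_ne hx, incl_of_ne hy⟩

@[simp]
lemma inclHom_apply (i : Fin k) (x : α i) : inclHom G H u v i x = incl u v i x :=
  rfl

lemma adj_inl_iff {i : Fin k} {x : {x : α i // x ≠ u i}} {b : (Σ i, {x : α i // x ≠ u i}) ⊕ β} :
    (glue G H u v).Adj (.inl ⟨i, x⟩) b ↔ ∃ y, (G i).Adj x y ∧ b = incl u v i y := by
  constructor
  · rintro (⟨_, _, y, h, ⟨⟩, rfl⟩ | ⟨_, _, h, ⟨⟨⟩, rfl⟩ | ⟨-, ⟨⟩⟩⟩ | ⟨_, _, _, ⟨⟩, -⟩)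
    · exact ⟨y, h, (incl_of_ne y.2).symm⟩
    · exact ⟨u i, h, (incl_self i).symm⟩
  · rintro ⟨y, h, rfl⟩
    simpa [incl_of_ne x.2] using (inclHom G H u v i).map_adj h

lemma adj_inr_iff {z : β} {b : (Σ i, {x : α i // x ≠ u i}) ⊕ β} :
    (glue G H u v).Adj (.inr z) b ↔
      (∃ z', H.Adj z z' ∧ b = .inr z') ∨ ∃ i y, z = v i ∧ (G i).Adj (u i) y ∧ b = incl u v i y := by
  constructor
  · rintro (⟨_, _, _, _, ⟨⟩, -⟩ | ⟨i, x, h, ⟨⟨⟩, -⟩ | ⟨rfl, ⟨⟩⟩⟩ | ⟨_, z', h, ⟨⟩, rfl⟩)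
    · exact .inr ⟨i, x, rfl, h.symm, (incl_of_ne x.2).symm⟩
    · exact .inl ⟨z', h, rfl⟩
  · rintro (⟨z', h, rfl⟩ | ⟨i, y, rfl, h, rfl⟩)
    · exact (inrHom G H u v).map_adj h
    · simpa using (inclHom G H u v i).map_adj h

variable (G H u v) in
noncomputable def distTo (w : β) : (Σ i, {x : α i // x ≠ u i}) ⊕ β → ℕ
  | .inl ⟨i, x⟩ => (G i).dist x (u i) + H.dist (v i) w
  | .inr z => H.dist z w

@[simp]
lemma distTo_inl (w : β) (i : Fin k) (x : {x : α i // x ≠ u i}) :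
    distTo G H u v w (.inl ⟨i, x⟩) = (G i).dist x (u i) + H.dist (v i) w :=
  rfl

@[simp]
lemma distTo_inr (w z : β) : distTo G H u v w (.inr z) = H.dist z w :=
  rfl

@[simp]
lemma distTo_incl (w : β) (i : Fin k) (y : α i) :
    distTo G H u v w (incl u v i y) = (G i).dist y (u i) + H.dist (v i) w := by
  by_cases hy : y = u i
  · subst hy
    simp
  · simp [incl_of_ne hy]

lemma distTo_le_of_adj (w : β) {a b : (Σ i, {x : α i // x ≠ u i}) ⊕ β}
    (hab : (glue G H u v).Adj a b) : distTo G H u v w a ≤ distTo G H u v w b + 1 := by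
  rcases a with ⟨i, x⟩ | z
  · obtain ⟨y, h, rfl⟩ := adj_inl_iff.mp hab
    have := h.dist_le_dist_add_one (u i)
    simp only [distTo_inl, distTo_incl]
    omega
  · rcases adj_inr_iff.mp hab with ⟨z', h, rfl⟩ | ⟨i, y, rfl, -, rfl⟩
    · exact h.dist_le_dist_add_one w
    · simp only [distTo_inr, distTo_incl]
      omega

lemma exists_walk_inr_length_eq (hHc : H.Connected) (z w : β) :
    ∃ p : (glue G H u v).Walk (.inr z) (.inr w), p.length = H.dist z w :=
  have ⟨q, hq⟩ := hHc.exists_walk_length_eq_dist z w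
  ⟨q.map (inrHom G H u v), (Walk.length_map ..).trans hq⟩

lemma exists_walk_incl_length_eq {i : Fin k} (hGc : (G i).Connected) (x : α i) :
    ∃ p : (glue G H u v).Walk (incl u v i x) (.inr (v i)), p.length = (G i).dist x (u i) :=
  have ⟨q, hq⟩ := hGc.exists_walk_length_eq_dist x (u i)
  ⟨(q.map (inclHom G H u v i)).copy rfl (incl_self i),
    (Walk.length_copy ..).trans <| (Walk.length_map ..).trans hq⟩

lemma exists_walk_length_le_distTo (hGc : ∀ i, (G i).Connected) (hHc : H.Connected) (w : β) :
    ∀ a, ∃ p : (glue G H u v).Walk a (.inr w), p.length ≤ distTo G H u v w a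
  | .inr z =>
    have ⟨p, hp⟩ := exists_walk_inr_length_eq hHc z w
    ⟨p, hp.le⟩
  | .inl ⟨i, x⟩ => by
    obtain ⟨p, hp⟩ := exists_walk_incl_length_eq (H := H) (v := v) (hGc i) x.1
    obtain ⟨q, hq⟩ := exists_walk_inr_length_eq (G := G) (u := u) hHc (v i) w
    exact ⟨(p.copy (incl_of_ne x.2) rfl).append q, by simp [hp, hq]⟩

lemma dist_eq_distTo (hGc : ∀ i, (G i).Connected) (hHc : H.Connected) (w : β)
    (a : (Σ i, {x : α i // x ≠ u i}) ⊕ β) :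
    (glue G H u v).dist a (.inr w) = distTo G H u v w a :=
  have ⟨p, hp⟩ := exists_walk_length_le_distTo hGc hHc w a
  p.dist_eq_of_length_le_of_forall_adj_le (fun _ _ => distTo_le_of_adj w) (by simp) hp

theorem maxDistantFrom_inl_iff (hGc : ∀ i, (G i).Connected) (hHc : H.Connected) {w : β}
    {i : Fin k} (x : {x : α i // x ≠ u i}) :
    MaxDistantFrom (glue G H u v) (.inl ⟨i, x⟩) (.inr w) ↔ MaxDistantFrom (G i) x (u i) := by
  simp only [MaxDistantFrom, adj_inl_iff, dist_eq_distTo hGc hHc]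
  constructor
  · intro h y hy
    simpa using h _ ⟨y, hy, rfl⟩
  · rintro h _ ⟨y, hy, rfl⟩
    simpa using h y hy

theorem maxDistantFrom_inr_iff (hGc : ∀ i, (G i).Connected) (hHc : H.Connected)
    (hu : ∀ i, ∃ y, (G i).Adj (u i) y) {w z : β} :
    MaxDistantFrom (glue G H u v) (.inr z) (.inr w) ↔ MaxDistantFrom H z w ∧ ∀ i, z ≠ v i := by
  simp only [MaxDistantFrom, adj_inr_iff, dist_eq_distTo hGc hHc]
  constructor
  · intro h
    refine ⟨fun z' hz' => by simpa using h _ (.inl ⟨z', hz', rfl⟩), ?_⟩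
    rintro i rfl
    obtain ⟨y, hy⟩ := hu i
    have := h _ (.inr ⟨i, y, rfl, hy, rfl⟩)
    simp [dist_eq_one_iff_adj.mpr hy.symm] at this
  · rintro ⟨hH, hv⟩ _ (⟨z', hz', rfl⟩ | ⟨i, y, rfl, -, rfl⟩)
    · simpa using hH z' hz'
    · exact absurd rfl (hv i)

end glue

theorem glue_maxDistant_from_H_vertex_general {k : ℕ} {α : Fin k → Type*} {β : Type*}
    (G : ∀ i, SimpleGraph (α i)) (H : SimpleGraph β)
    (u : ∀ i, α i) (v : Fin k → β)
    (hGc : ∀ i, (G i).Connected) (hHc : H.Connected)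
    (hGn : ∀ i, Nontrivial (α i)) (w : β) :
    {a | MaxDistantFrom (glue G H u v) a (Sum.inr w)} =
      {a | (∃ z : β, a = Sum.inr z ∧ MaxDistantFrom H z w ∧ ∀ i, z ≠ v i) ∨
        (∃ (i : Fin k) (x : {z : α i // z ≠ u i}),
          a = Sum.inl ⟨i, x⟩ ∧ MaxDistantFrom (G i) x.1 (u i))} := by
  have hu i : ∃ y, (G i).Adj (u i) y := (hGc i).preconnected.exists_adj_of_nontrivial (u i)
  ext (⟨i, x⟩ | z)
  · simp only [Set.mem_ofPred_eq, glue.maxDistantFrom_inl_iff hGc hHc, reduceCtorEq, false_and,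
      exists_false, false_or]
    refine ⟨fun h => ⟨i, x, rfl, h⟩, ?_⟩
    rintro ⟨_, _, ⟨⟩, hy⟩
    exact hy
  · simp [glue.maxDistantFrom_inr_iff hGc hHc hu]

/-- For a vertex `w` of `H`, the set of vertices maximally distant from `w` in the glued
graph `J` is `(MD_H(w) \ {v 1,…,v k}) ∪ ⋃ i, MD_{G i}(u i)`. -/
theorem glue_maxDistant_from_H_vertex {k : ℕ} {α : Fin k → Type*} {β : Type*}
    (G : ∀ i, SimpleGraph (α i)) (H : SimpleGraph β)
    (u : ∀ i, α i) (v : Fin k → β)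
    (hGc : ∀ i, (G i).Connected) (hHc : H.Connected)
    (hGn : ∀ i, Nontrivial (α i)) (hHn : Nontrivial β) (w : β) :
    {a | MaxDistantFrom (glue G H u v) a (Sum.inr w)} =
      {a | (∃ z : β, a = Sum.inr z ∧ MaxDistantFrom H z w ∧ ∀ i, z ≠ v i) ∨
        (∃ (i : Fin k) (x : {z : α i // z ≠ u i}),
          a = Sum.inl ⟨i, x⟩ ∧ MaxDistantFrom (G i) x.1 (u i))} :=
  glue_maxDistant_from_H_vertex_general G H u v hGc hHc hGn w
end

section
/- With the gluing construction J, two vertices u'_i, u''_i ∈ V(G_i) \ {u_i} are mutually maximally distant in J if and only if they are mutually maximally distant in G_i. -/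
/-! The inclusion of `G i` into the glued graph (sending `u i` to `v i`) has a retraction that
collapses everything outside `V(G i) \ {u i}` onto `u i` and maps edges to edges or single
vertices, so the inclusion preserves distances. Moreover the neighbours in the glued graph of a
vertex of `V(G i) \ {u i}` are exactly the images of its neighbours in `G i`. Being maximally
distant only involves distances and neighbours, hence transfers along the inclusion. -/

open SimpleGraph

namespace SimpleGraph

variable {V W : Type*} {G : SimpleGraph V} {G' : SimpleGraph W}

lemma edist_le_of_adj_or_eq {g : V → W}
    (hg : ∀ a b, G.Adj a b → g a = g b ∨ G'.Adj (g a) (g b)) (a b : V) :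
    G'.edist (g a) (g b) ≤ G.edist a b := by
  refine le_iInf fun p => ?_
  induction p with
  | nil => simp
  | cons hab p ih =>
    calc G'.edist (g _) (g _) ≤ G'.edist (g _) (g _) + G'.edist (g _) (g _) :=
          SimpleGraph.edist_triangle
      _ ≤ 1 + p.length := by
          gcongr
          exact edist_le_one_iff_adj_or_eq.2 (hg _ _ hab).symm
      _ = (p.cons hab).length := by push_cast [Walk.length_cons]; ring

lemma dist_eq_of_leftInverse {f : V → W} {g : W → V} (hgf : Function.LeftInverse g f)
    (hf : ∀ a b, G.Adj a b → G'.Adj (f a) (f b))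
    (hg : ∀ a b, G'.Adj a b → g a = g b ∨ G.Adj (g a) (g b)) (a b : V) :
    G'.dist (f a) (f b) = G.dist a b := by
  have hle := edist_le_of_adj_or_eq (fun a b h => Or.inr (hf a b h)) a b
  have hge := edist_le_of_adj_or_eq hg (f a) (f b)
  rw [hgf a, hgf b] at hge
  rw [dist, dist, le_antisymm hle hge]

lemma maxDistantFrom_map_iff {f : V → W} (hdist : ∀ a b, G'.dist (f a) (f b) = G.dist a b)
    {x y : V} (hadj : ∀ z, G'.Adj (f y) z ↔ ∃ w, G.Adj y w ∧ f w = z) :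
    MaxDistantFrom G' (f y) (f x) ↔ MaxDistantFrom G y x := by
  simp only [MaxDistantFrom, hadj, forall_exists_index, and_imp, forall_apply_eq_imp_iff₂, hdist]

lemma mutuallyMaxDistant_map_iff {f : V → W} (hdist : ∀ a b, G'.dist (f a) (f b) = G.dist a b)
    {x y : V} (hx : ∀ z, G'.Adj (f x) z ↔ ∃ w, G.Adj x w ∧ f w = z)
    (hy : ∀ z, G'.Adj (f y) z ↔ ∃ w, G.Adj y w ∧ f w = z) :
    MutuallyMaxDistant G' (f x) (f y) ↔ MutuallyMaxDistant G x y :=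
  and_congr (maxDistantFrom_map_iff hdist hx) (maxDistantFrom_map_iff hdist hy)

end SimpleGraph

section Glue

variable {k : ℕ} {α : Fin k → Type*} {β : Type*}
  (G : ∀ i, SimpleGraph (α i)) (H : SimpleGraph β) (u : ∀ i, α i) (v : Fin k → β)

open Classical in
noncomputable def glueIncl (i : Fin k) (z : α i) : (Σ j, {x : α j // x ≠ u j}) ⊕ β :=
  if h : z = u i then Sum.inr (v i) else Sum.inl ⟨i, ⟨z, h⟩⟩

def glueProj (i : Fin k) : (Σ j, {x : α j // x ≠ u j}) ⊕ β → α i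
  | Sum.inl ⟨j, z⟩ => if h : j = i then h ▸ z.1 else u i
  | Sum.inr _ => u i

variable {G H u v}

lemma glueIncl_of_ne (i : Fin k) (z : {x : α i // x ≠ u i}) :
    glueIncl u v i z.1 = Sum.inl ⟨i, z⟩ := by
  simp [glueIncl, z.2]

lemma glueProj_glueIncl (i : Fin k) :
    Function.LeftInverse (glueProj u i) (glueIncl (β := β) u v i) := by
  intro a
  by_cases h : a = u i <;> simp [glueIncl, glueProj, h]

lemma glue_adj_glueIncl (i : Fin k) {a b : α i} (hab : (G i).Adj a b) :
    (glue G H u v).Adj (glueIncl u v i a) (glueIncl u v i b) := by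
  by_cases ha : a = u i <;> by_cases hb : b = u i
  · exact absurd (ha.trans hb.symm) hab.ne
  · exact Or.inr (Or.inl ⟨i, ⟨b, hb⟩, by simpa [ha] using hab.symm,
      Or.inr ⟨by simp [glueIncl, hb], by simp [glueIncl, ha]⟩⟩)
  · exact Or.inr (Or.inl ⟨i, ⟨a, ha⟩, by simpa [hb] using hab,
      Or.inl ⟨by simp [glueIncl, ha], by simp [glueIncl, hb]⟩⟩)
  · exact Or.inl ⟨i, ⟨a, ha⟩, ⟨b, hb⟩, hab, by simp [glueIncl, ha],
      by simp [glueIncl, hb]⟩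

lemma glue_adj_glueProj (i : Fin k) {a b} (hab : (glue G H u v).Adj a b) :
    glueProj u i a = glueProj u i b ∨ (G i).Adj (glueProj u i a) (glueProj u i b) := by
  obtain ⟨j, x, y, hxy, rfl, rfl⟩ | ⟨j, x, hx, ⟨rfl, rfl⟩ | ⟨rfl, rfl⟩⟩ |
    ⟨w, w', _, rfl, rfl⟩ := hab
  · by_cases h : j = i
    · subst h; right; simpa [glueProj] using hxy
    · left; simp [glueProj, h]
  · by_cases h : j = i
    · subst h; right; simpa [glueProj] using hx
    · left; simp [glueProj, h]
  · by_cases h : j = i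
    · subst h; right; simpa [glueProj] using hx.symm
    · left; simp [glueProj, h]
  · left; rfl

lemma glue_dist_glueIncl (i : Fin k) (a b : α i) :
    (glue G H u v).dist (glueIncl u v i a) (glueIncl u v i b) = (G i).dist a b :=
  SimpleGraph.dist_eq_of_leftInverse (glueProj_glueIncl i) (fun _ _ => glue_adj_glueIncl i)
    (fun _ _ => glue_adj_glueProj i) a b

lemma glue_adj_glueIncl_iff (i : Fin k) (x : {z : α i // z ≠ u i}) (b) :
    (glue G H u v).Adj (glueIncl u v i x.1) b ↔
      ∃ w, (G i).Adj x.1 w ∧ glueIncl u v i w = b := by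
  refine ⟨fun h => ?_, fun ⟨w, hw, hb⟩ => hb ▸ glue_adj_glueIncl i hw⟩
  rw [glueIncl_of_ne] at h
  obtain ⟨j, x', y', hxy, ha, rfl⟩ | ⟨j, x', hx', ⟨ha, rfl⟩ | ⟨rfl, ha⟩⟩ |
    ⟨w, w', _, ha, _⟩ := h
  · obtain ⟨rfl, hx⟩ : i = j ∧ HEq x x' := by simpa using ha
    cases eq_of_heq hx
    exact ⟨y'.1, hxy, glueIncl_of_ne i y'⟩
  · obtain ⟨rfl, hx⟩ : i = j ∧ HEq x x' := by simpa using ha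
    cases eq_of_heq hx
    exact ⟨u i, hx', by simp [glueIncl]⟩
  · simp at ha
  · simp at ha

end Glue

theorem glue_mmd_within_part_general {k : ℕ} {α : Fin k → Type*} {β : Type*}
    (G : ∀ i, SimpleGraph (α i)) (H : SimpleGraph β)
    (u : ∀ i, α i) (v : Fin k → β)
    (i : Fin k) (x y : {z : α i // z ≠ u i}) :
    MutuallyMaxDistant (glue G H u v) (Sum.inl ⟨i, x⟩) (Sum.inl ⟨i, y⟩) ↔
      MutuallyMaxDistant (G i) x.1 y.1 := by
  rw [← glueIncl_of_ne (v := v) i x, ← glueIncl_of_ne (v := v) i y]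
  exact SimpleGraph.mutuallyMaxDistant_map_iff (glue_dist_glueIncl i)
    (glue_adj_glueIncl_iff i x) (glue_adj_glueIncl_iff i y)

/-- Two vertices of `V(G i) \ {u i}` are mutually maximally distant in the glued graph
`J` iff they are mutually maximally distant in `G i`. -/
theorem glue_mmd_within_part {k : ℕ} {α : Fin k → Type*} {β : Type*}
    (G : ∀ i, SimpleGraph (α i)) (H : SimpleGraph β)
    (u : ∀ i, α i) (v : Fin k → β)
    (hGc : ∀ i, (G i).Connected) (hHc : H.Connected)
    (hGn : ∀ i, Nontrivial (α i)) (hHn : Nontrivial β)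
    (i : Fin k) (x y : {z : α i // z ≠ u i}) :
    MutuallyMaxDistant (glue G H u v) (Sum.inl ⟨i, x⟩) (Sum.inl ⟨i, y⟩) ↔
      MutuallyMaxDistant (G i) x.1 y.1 :=
  glue_mmd_within_part_general G H u v i x y
end
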